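/- Let 0 < μ < 1 < ν < 2, let α be real with |α| < 1, let b ∈ ℕ, and assume e_{ν-μ,ν}(α, b+2) ≠ 0. Define the Green's function G on {0, ..., b+3} × {1, ..., b+2} by G(n, j) = e_{ν-μ,ν}(α, n-1)·e_{ν-μ,ν}(α, b+2-j)/e_{ν-μ,ν}(α, b+2) - e_{ν-μ,ν}(α, n-j-1) if j ≤ n, and G(n, j) = e_{ν-μ,ν}(α, n-1)·e_{ν-μ,ν}(α, b+2-j)/e_{ν-μ,ν}(α, b+2) if j ≥ n+1 (with e_{ν-μ,ν}(α, -1) = 0). Then for every H : {1, ..., b+2} → ℝ, the function Y(n) := ∑_{j=1}^{b+2} G(n, j) H(j) satisfies Y(0) = Y(b+3) = 0 and -(g_Y(t+2) - 2 g_Y(t+1) + g_Y(t)) + α(W_Y(t+1) - W_Y(t)) = H(t+1) for all t ∈ {0, ..., b+1}. -/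

import Mathlib

/-- Generalized falling factorial `t^(ρ) = Γ(t+1)/Γ(t+1-ρ)` (equal to `0` when
`t+1-ρ` is a pole of `Γ`, by Mathlib's conventions). -/
noncomputable def ffact (t ρ : ℝ) : ℝ := Real.Gamma (t + 1) / Real.Gamma (t + 1 - ρ)

/-- `g_Y(t) = (1/Γ(2-ν)) ∑_{j=0}^{t} (t+1-ν-j)^(1-ν) Y(j)`, so that
`Δ^ν y(t) = g_Y(t+2) - 2g_Y(t+1) + g_Y(t)` (with `Y(n) = y(ν-2+n)`). -/
noncomputable def gY (ν : ℝ) (Y : ℕ → ℝ) (t : ℕ) : ℝ :=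
  (1 / Real.Gamma (2 - ν)) *
    ∑ j ∈ Finset.range (t + 1), ffact ((t : ℝ) + 1 - ν - (j : ℝ)) (1 - ν) * Y j

/-- `W_Y(t) = (1/Γ(1-μ)) ∑_{j=0}^{t} (t-μ-j)^(-μ) Y(j+1)`, so that
`Δ^μ y(t+ν-μ) = W_Y(t+1) - W_Y(t)` (with `Y(n) = y(ν-2+n)`). -/
noncomputable def WY (μ : ℝ) (Y : ℕ → ℝ) (t : ℕ) : ℝ :=
  (1 / Real.Gamma (1 - μ)) *
    ∑ j ∈ Finset.range (t + 1), ffact ((t : ℝ) - μ - (j : ℝ)) (-μ) * Y (j + 1)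

/-- Two-parameter delta discrete Mittag-Leffler function at an integer `n ≥ -1`:
`e_{a,b}(λ, n) = ∑_{k=0}^∞ λ^k (n + k a + b - 1)^(k a + b - 1)/Γ(k a + b)`; in
particular `e_{a,b}(λ, -1) = 0`. -/
noncomputable def mittagLeffler (a b lam : ℝ) (n : ℤ) : ℝ :=
  ∑' k : ℕ, lam ^ k * ffact ((n : ℝ) + (k : ℝ) * a + b - 1) ((k : ℝ) * a + b - 1) /
    Real.Gamma ((k : ℝ) * a + b)

/-- The Green's function of the Dirichlet problem, defined on
`{0,…,b+3} × {1,…,b+2}`: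
`G(n,j) = e_{ν-μ,ν}(α,n-1) e_{ν-μ,ν}(α,b+2-j)/e_{ν-μ,ν}(α,b+2) - e_{ν-μ,ν}(α,n-j-1)`
for `j ≤ n`, and
`G(n,j) = e_{ν-μ,ν}(α,n-1) e_{ν-μ,ν}(α,b+2-j)/e_{ν-μ,ν}(α,b+2)` for `j ≥ n+1`. -/
noncomputable def green (μ ν α : ℝ) (b : ℕ) (n j : ℕ) : ℝ :=
  if j ≤ n then
    mittagLeffler (ν - μ) ν α ((n : ℤ) - 1) * mittagLeffler (ν - μ) ν α ((b : ℤ) + 2 - j) /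
        mittagLeffler (ν - μ) ν α ((b : ℤ) + 2)
      - mittagLeffler (ν - μ) ν α ((n : ℤ) - (j : ℤ) - 1)
  else
    mittagLeffler (ν - μ) ν α ((n : ℤ) - 1) * mittagLeffler (ν - μ) ν α ((b : ℤ) + 2 - j) /
      mittagLeffler (ν - μ) ν α ((b : ℤ) + 2)

open Finset

/-! ### Auxiliary: quotient-Pochhammer function `Fq` and its calculus -/

noncomputable def Fq (x : ℝ) (m : ℕ) : ℝ := (∏ i ∈ range m, (x + i)) / m.factorial

lemma Fq_zero (x : ℝ) : Fq x 0 = 1 := by simp [Fq]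

lemma Fq_succ (x : ℝ) (m : ℕ) : ((m:ℝ)+1) * Fq x (m+1) = (x + m) * Fq x m := by
  have h1 : (Nat.factorial (m+1) : ℝ) = ((m:ℝ)+1) * m.factorial := by
    push_cast [Nat.factorial_succ]; ring
  have h2 : (∏ i ∈ range (m+1), (x + i)) = (∏ i ∈ range m, (x + i)) * (x + m) := by
    rw [prod_range_succ]
  have hm : (m.factorial : ℝ) ≠ 0 := by exact_mod_cast m.factorial_ne_zero
  have hm1 : ((m:ℝ)+1) ≠ 0 := by positivity
  unfold Fq
  rw [h1, h2]
  field_simp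

lemma Fq_vandermonde (x y : ℝ) (t : ℕ) :
    ∑ j ∈ range (t+1), Fq x j * Fq y (t - j) = Fq (x + y) t := by
  induction t with
  | zero => simp [Fq]
  | succ t ih =>
    have key : ((t:ℝ)+1) * ∑ j ∈ range (t+2), Fq x j * Fq y (t+1-j)
        = ((t:ℝ)+1) * Fq (x+y) (t+1) := by
      have expand : ((t:ℝ)+1) * ∑ j ∈ range (t+2), Fq x j * Fq y (t+1-j)
          = (∑ j ∈ range (t+2), (j:ℝ) * Fq x j * Fq y (t+1-j))
            + ∑ j ∈ range (t+2), ((t+1-j : ℕ):ℝ) * Fq y (t+1-j) * Fq x j := by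
        rw [mul_sum, ← sum_add_distrib]
        refine sum_congr rfl ?_
        intro j hj
        have hj' : j ≤ t+1 := by simpa [Nat.lt_succ_iff] using hj
        have : ((t+1-j : ℕ):ℝ) = (t:ℝ) + 1 - j := by
          push_cast [Nat.cast_sub hj']; ring
        rw [this]; ring
      have s1 : (∑ j ∈ range (t+2), (j:ℝ) * Fq x j * Fq y (t+1-j))
          = ∑ i ∈ range (t+1), (x + i) * Fq x i * Fq y (t-i) := by
        rw [Finset.sum_range_succ']
        simp only [Nat.cast_zero, zero_mul, add_zero, Nat.cast_succ]
        refine sum_congr rfl ?_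
        intro i _
        have h1 : t + 1 - (i+1) = t - i := by omega
        rw [h1]
        have h2 := Fq_succ x i
        push_cast
        linear_combination h2 * Fq y (t - i)
      have s2 : (∑ j ∈ range (t+2), ((t+1-j : ℕ):ℝ) * Fq y (t+1-j) * Fq x j)
          = ∑ j ∈ range (t+1), (y + (t-j : ℕ)) * Fq y (t-j) * Fq x j := by
        rw [Finset.sum_range_succ]
        simp only [Nat.sub_self, Nat.cast_zero, zero_mul]
        rw [add_zero]
        refine sum_congr rfl ?_
        intro j hj
        have hj' : j ≤ t := by simpa [Nat.lt_succ_iff] using hj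
        have h1 : t + 1 - j = (t - j) + 1 := by omega
        rw [h1]
        have h2 := Fq_succ y (t - j)
        push_cast
        linear_combination h2 * Fq x j
      have s3 : (∑ i ∈ range (t+1), (x + i) * Fq x i * Fq y (t-i))
            + ∑ j ∈ range (t+1), (y + (t-j : ℕ)) * Fq y (t-j) * Fq x j
          = (x + y + t) * ∑ j ∈ range (t+1), Fq x j * Fq y (t-j) := by
        rw [mul_sum, ← sum_add_distrib]
        refine sum_congr rfl ?_
        intro j hj
        have hj' : j ≤ t := by simpa [Nat.lt_succ_iff] using hj
        have : ((t-j : ℕ):ℝ) = (t:ℝ) - j := by push_cast [Nat.cast_sub hj']; ring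
        rw [this]; ring
      rw [expand, s1, s2, s3, ih]
      have h2 := Fq_succ (x + y) t
      push_cast at h2 ⊢
      linear_combination -h2
    have hne : ((t:ℝ)+1) ≠ 0 := by positivity
    exact mul_left_cancel₀ hne key


lemma Gamma_nat_add (x : ℝ) (hx : 0 < x) (m : ℕ) :
    Real.Gamma ((m:ℝ) + x) = (∏ i ∈ range m, (x + i)) * Real.Gamma x := by
  induction m with
  | zero => simp
  | succ m ih =>
    have hne : (m:ℝ) + x ≠ 0 := by positivity
    have : ((m:ℝ)+1) + x = ((m:ℝ) + x) + 1 := by ring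
    rw [Nat.cast_succ, this, Real.Gamma_add_one hne, ih, prod_range_succ]
    ring

lemma Fq_eq_Gamma (x : ℝ) (hx : 0 < x) (m : ℕ) :
    Real.Gamma ((m:ℝ) + x) / Real.Gamma ((m:ℝ) + 1)
      = Fq x m * Real.Gamma x := by
  rw [Gamma_nat_add x hx m, Real.Gamma_nat_eq_factorial m, Fq]
  have : (m.factorial : ℝ) ≠ 0 := by exact_mod_cast m.factorial_ne_zero
  field_simp

/-- shifted basis function -/
noncomputable def fk (d : ℝ) (s n : ℕ) : ℝ := if s ≤ n then Fq d (n - s) else 0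

lemma Fq_param (d : ℝ) (m : ℕ) : d * Fq (d+1) m = (d + m) * Fq d m := by
  have h1 : d * (∏ i ∈ range m, (d + 1 + i)) = (d + m) * ∏ i ∈ range m, (d + i) := by
    have e1 : (∏ i ∈ range m, (d + 1 + i)) = ∏ i ∈ range m, (d + (i+1)) := by
      refine prod_congr rfl fun i _ => by push_cast; ring
    have e2 : d * ∏ i ∈ range m, (d + ((i:ℝ)+1)) = ∏ i ∈ range (m+1), (d + i) := by
      rw [prod_range_succ']
      push_cast; ring
    rw [e1, e2, prod_range_succ]
    ring
  unfold Fq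
  field_simp
  linear_combination h1

lemma Fq_diff (d : ℝ) (m : ℕ) : Fq (d+1) (m+1) - Fq (d+1) m = Fq d (m+1) := by
  have h1 := Fq_succ (d+1) m
  have h2 := Fq_succ d m
  have h3 := Fq_param d m
  have hne : ((m:ℝ)+1) ≠ 0 := by positivity
  have key : ((m:ℝ)+1) * (Fq (d+1) (m+1) - Fq (d+1) m) = ((m:ℝ)+1) * Fq d (m+1) := by
    linear_combination h1 + h3 - h2
  exact mul_left_cancel₀ hne key

lemma fk_step (d : ℝ) (s t : ℕ) : fk (d+1) s (t+1) - fk (d+1) s t = fk d s (t+1) := by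
  unfold fk
  rcases le_or_gt s t with h | h
  · rw [if_pos (by omega), if_pos h, if_pos (by omega)]
    have e : t + 1 - s = (t - s) + 1 := by omega
    rw [e, Fq_diff]
  · rcases Nat.eq_or_lt_of_le h with he | hlt
    · rw [if_pos (by omega), if_neg (by omega), if_pos (by omega)]
      have : t + 1 - s = 0 := by omega
      rw [this, Fq_zero, Fq_zero]; ring
    · rw [if_neg (by omega), if_neg (by omega), if_neg (by omega)]; ring

lemma Fq_zero_param (m : ℕ) : Fq 0 m = if m = 0 then 1 else 0 := by
  cases m with
  | zero => simp [Fq]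
  | succ m => 
    simp only [Nat.succ_ne_zero, if_false, Fq]
    rw [prod_range_succ']
    simp

lemma fk_zero_param (s n : ℕ) : fk 0 s n = if n = s then 1 else 0 := by
  unfold fk
  rcases le_or_gt s n with h | h
  · rw [if_pos h, Fq_zero_param]
    by_cases he : n = s <;> simp [he, Nat.sub_eq_zero_iff_le] <;> omega
  · rw [if_neg (by omega), if_neg (by omega)]

lemma fk_shift (d : ℝ) (s n : ℕ) (hs : 1 ≤ s) : fk d s (n+1) = fk d (s-1) n := by
  unfold fk
  have h1 : s ≤ n + 1 ↔ s - 1 ≤ n := by omega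
  by_cases h : s ≤ n + 1
  · rw [if_pos h, if_pos (h1.mp h)]
    congr 1
    omega
  · rw [if_neg h, if_neg (fun hc => h (h1.mpr hc))]

/-- convolution with `Fq y` coefficients -/
lemma fk_conv (y d : ℝ) (s t : ℕ) :
    ∑ j ∈ range (t+1), Fq y (t-j) * fk d s j = fk (y+d) s t := by
  rcases le_or_gt s t with h | h
  · have e1 : ∑ j ∈ range (t+1), Fq y (t-j) * fk d s j
        = ∑ j ∈ Ico s (t+1), Fq y (t-j) * Fq d (j - s) := by
      rw [← sum_filter_add_sum_filter_not (range (t+1)) (fun j => s ≤ j)]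
      have e2 : ∑ j ∈ filter (fun j => ¬ s ≤ j) (range (t+1)), Fq y (t-j) * fk d s j = 0 := by
        refine sum_eq_zero fun j hj => ?_
        simp only [mem_filter] at hj
        simp [fk, hj.2]
      rw [e2, add_zero]
      have e3 : filter (fun j => s ≤ j) (range (t+1)) = Ico s (t+1) := by
        ext j; simp [Nat.lt_succ_iff, mem_Ico]; omega
      rw [e3]
      refine sum_congr rfl fun j hj => ?_
      simp only [mem_Ico] at hj
      simp [fk, hj.1]
    rw [e1, sum_Ico_eq_sum_range]
    have e4 : t + 1 - s = (t - s) + 1 := by omega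
    rw [e4]
    have e5 : ∀ i ∈ range ((t-s)+1), Fq y (t - (s + i)) * Fq d (s + i - s)
        = Fq d i * Fq y ((t-s) - i) := by
      intro i hi
      have : t - (s + i) = (t - s) - i := by omega
      rw [this, Nat.add_sub_cancel_left, mul_comm]
    rw [sum_congr rfl e5, Fq_vandermonde]
    simp [fk, h, add_comm]
  · have e1 : ∑ j ∈ range (t+1), Fq y (t-j) * fk d s j = 0 := by
      refine sum_eq_zero fun j hj => ?_
      simp only [mem_range, Nat.lt_succ_iff] at hj
      simp [fk, show ¬ s ≤ j by omega]
    rw [e1, fk, if_neg (by omega)]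



lemma Fq_bound (d : ℝ) (m n : ℕ) (hmn : m ≤ n) : |Fq d m| ≤ (1 + |d| + n)^n := by
  have hb : (1:ℝ) ≤ 1 + |d| + n := by
    have := abs_nonneg d
    have : (0:ℝ) ≤ n := Nat.cast_nonneg n
    linarith [abs_nonneg d]
  have h1 : |Fq d m| ≤ |∏ i ∈ range m, (d + i)| := by
    rw [Fq, abs_div]
    have hf : (1:ℝ) ≤ |(m.factorial : ℝ)| := by
      rw [abs_of_pos (by positivity)]
      exact_mod_cast m.factorial_pos
    exact div_le_self (abs_nonneg _) hf
  have h2 : |∏ i ∈ range m, (d + i)| ≤ (1 + |d| + n)^m := by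
    rw [abs_prod]
    calc ∏ i ∈ range m, |d + (i:ℝ)| ≤ ∏ _i ∈ range m, (1 + |d| + n) := by
          refine prod_le_prod (fun i _ => abs_nonneg _) (fun i hi => ?_)
          simp only [mem_range] at hi
          have : |d + (i:ℝ)| ≤ |d| + i := by
            calc |d + (i:ℝ)| ≤ |d| + |(i:ℝ)| := abs_add_le _ _
              _ = |d| + i := by rw [Nat.abs_cast]
          have hin : (i:ℝ) ≤ n := by exact_mod_cast (by omega : i ≤ n)
          linarith
      _ = (1 + |d| + n)^m := by rw [prod_const, card_range]
  calc |Fq d m| ≤ (1 + |d| + n)^m := h1.trans h2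
    _ ≤ (1 + |d| + n)^n := pow_le_pow_right₀ hb hmn

lemma fk_bound (d : ℝ) (s n : ℕ) : |fk d s n| ≤ (1 + |d| + n)^n := by
  unfold fk
  split
  · exact Fq_bound d (n - s) n (by omega)
  · rw [abs_zero]; positivity

lemma summable_aux {α : ℝ} (hα : |α| < 1) (n : ℕ) :
    Summable (fun k : ℕ => ((k:ℝ)+1)^n * |α|^k) := by
  have h1 : Summable (fun k : ℕ => (2:ℝ)^n * ((k:ℝ)^n * |α|^k) + (2:ℝ)^n * |α|^k) := by
    have ha : ‖|α|‖ < 1 := by rwa [Real.norm_eq_abs, abs_abs]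
    exact ((summable_pow_mul_geometric_of_norm_lt_one n ha).mul_left _).add
      ((summable_geometric_of_lt_one (abs_nonneg α) hα).mul_left _)
  refine h1.of_nonneg_of_le (fun k => by positivity) (fun k => ?_)
  have hk : ((k:ℝ)+1)^n ≤ (2:ℝ)^n * (k:ℝ)^n + (2:ℝ)^n := by
    rcases Nat.eq_zero_or_pos k with rfl | hk
    · simp
      calc (1:ℝ) ≤ 2^n := one_le_pow₀ (by norm_num)
        _ ≤ 2^n * 0^n + 2^n := by
          have : (0:ℝ) ≤ 2^n * 0^n := by positivity
          linarith
    · have h2 : ((k:ℝ)+1)^n ≤ (2*(k:ℝ))^n := by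
        refine pow_le_pow_left₀ (by positivity) ?_ n
        have : (1:ℝ) ≤ k := by exact_mod_cast hk
        linarith
      rw [mul_pow] at h2
      nlinarith [pow_nonneg (by positivity : (0:ℝ) ≤ 2*(k:ℝ)) n, pow_pos (by positivity : (0:ℝ) < 2) n]
  have hp : (0:ℝ) ≤ |α|^k := by positivity
  nlinarith [pow_nonneg (abs_nonneg (α:ℝ)) k]

lemma summable_fk {α : ℝ} (hα : |α| < 1) (a β : ℝ) (s n : ℕ) :
    Summable (fun k : ℕ => α^k * fk ((k:ℝ)*a + β) s n) := by
  set C : ℝ := (1 + |a| + |β| + n)^n with hC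
  have h1 : Summable (fun k : ℕ => C * (((k:ℝ)+1)^n * |α|^k)) :=
    (summable_aux hα n).mul_left _
  refine Summable.of_abs (h1.of_nonneg_of_le (fun k => abs_nonneg _) (fun k => ?_))
  rw [abs_mul, abs_pow]
  have hb1 : |fk ((k:ℝ)*a + β) s n| ≤ (1 + |(k:ℝ)*a + β| + n)^n := fk_bound _ s n
  have hb2 : (1 + |(k:ℝ)*a + β| + n)^n ≤ C * ((k:ℝ)+1)^n := by
    rw [hC, ← mul_pow]
    refine pow_le_pow_left₀ (by positivity) ?_ n
    have : |(k:ℝ)*a + β| ≤ k * |a| + |β| := by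
      calc |(k:ℝ)*a + β| ≤ |(k:ℝ)*a| + |β| := abs_add_le _ _
        _ = k * |a| + |β| := by rw [abs_mul, abs_of_nonneg (by positivity : (0:ℝ) ≤ (k:ℝ))]
    have hk0 : (0:ℝ) ≤ k := by positivity
    nlinarith [abs_nonneg a, abs_nonneg β]
  have := mul_le_mul_of_nonneg_left (hb1.trans hb2) (pow_nonneg (abs_nonneg α) k)
  calc |α|^k * |fk ((k:ℝ)*a + β) s n| ≤ |α|^k * (C * ((k:ℝ)+1)^n) := this
    _ = C * (((k:ℝ)+1)^n * |α|^k) := by ring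


lemma gY_eq {ν : ℝ} (hν : 0 < 2 - ν) (Y : ℕ → ℝ) (t : ℕ) :
    gY ν Y t = ∑ j ∈ range (t+1), Fq (2-ν) (t-j) * Y j := by
  have hΓ : Real.Gamma (2-ν) ≠ 0 := (Real.Gamma_pos_of_pos hν).ne'
  unfold gY
  rw [Finset.mul_sum]
  refine sum_congr rfl fun j hj => ?_
  simp only [mem_range, Nat.lt_succ_iff] at hj
  have e1 : (t:ℝ) + 1 - ν - j + 1 = ((t-j : ℕ):ℝ) + (2 - ν) := by
    rw [Nat.cast_sub hj]; ring
  have e2 : (t:ℝ) + 1 - ν - j + 1 - (1 - ν) = ((t-j : ℕ):ℝ) + 1 := by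
    rw [Nat.cast_sub hj]; ring
  have e2' : ((t-j : ℕ):ℝ) + (2 - ν) - (1 - ν) = ((t-j : ℕ):ℝ) + 1 := by ring
  rw [ffact, e1, e2', Fq_eq_Gamma _ hν]
  field_simp

lemma WY_eq {μ : ℝ} (hμ : 0 < 1 - μ) (Y : ℕ → ℝ) (t : ℕ) :
    WY μ Y t = ∑ j ∈ range (t+1), Fq (1-μ) (t-j) * Y (j+1) := by
  have hΓ : Real.Gamma (1-μ) ≠ 0 := (Real.Gamma_pos_of_pos hμ).ne'
  unfold WY
  rw [Finset.mul_sum]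
  refine sum_congr rfl fun j hj => ?_
  simp only [mem_range, Nat.lt_succ_iff] at hj
  have e1 : (t:ℝ) - μ - j + 1 = ((t-j : ℕ):ℝ) + (1 - μ) := by
    rw [Nat.cast_sub hj]; ring
  have e2 : (t:ℝ) - μ - j + 1 - (-μ) = ((t-j : ℕ):ℝ) + 1 := by
    rw [Nat.cast_sub hj]; ring
  have e2' : ((t-j : ℕ):ℝ) + (1 - μ) - (-μ) = ((t-j : ℕ):ℝ) + 1 := by ring
  rw [ffact, e1, e2', Fq_eq_Gamma _ hμ]
  field_simp

lemma gY_fk {ν : ℝ} (hν : 0 < 2 - ν) (d : ℝ) (s t : ℕ) :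
    gY ν (fk d s) t = fk ((2-ν)+d) s t := by
  rw [gY_eq hν, fk_conv]

lemma WY_fk {μ : ℝ} (hμ : 0 < 1 - μ) (d : ℝ) (s t : ℕ) (hs : 1 ≤ s) :
    WY μ (fk d s) t = fk ((1-μ)+d) (s-1) t := by
  rw [WY_eq hμ]
  have : ∀ j ∈ range (t+1), Fq (1-μ) (t-j) * fk d s (j+1)
      = Fq (1-μ) (t-j) * fk d (s-1) j := fun j _ => by rw [fk_shift d s j hs]
  rw [sum_congr rfl this, fk_conv]

lemma gY_tsum {ν : ℝ} (f : ℕ → ℕ → ℝ) (hf : ∀ j, Summable fun k => f k j) (t : ℕ) :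
    gY ν (fun n => ∑' k, f k n) t = ∑' k, gY ν (f k) t := by
  unfold gY
  have e : ∀ j ∈ range (t+1),
      ffact ((t : ℝ) + 1 - ν - (j : ℝ)) (1 - ν) * ∑' k, f k j
        = ∑' k, ffact ((t : ℝ) + 1 - ν - (j : ℝ)) (1 - ν) * f k j :=
    fun j _ => (tsum_mul_left).symm
  rw [sum_congr rfl e, ← Summable.tsum_finsetSum (fun j _ => (hf j).mul_left _), tsum_mul_left]

lemma WY_tsum {μ : ℝ} (f : ℕ → ℕ → ℝ) (hf : ∀ j, Summable fun k => f k j) (t : ℕ) :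
    WY μ (fun n => ∑' k, f k n) t = ∑' k, WY μ (f k) t := by
  unfold WY
  have e : ∀ j ∈ range (t+1),
      ffact ((t : ℝ) - μ - (j : ℝ)) (-μ) * ∑' k, f k (j+1)
        = ∑' k, ffact ((t : ℝ) - μ - (j : ℝ)) (-μ) * f k (j+1) :=
    fun j _ => (tsum_mul_left).symm
  rw [sum_congr rfl e, ← Summable.tsum_finsetSum (fun j _ => (hf (j+1)).mul_left _), tsum_mul_left]


/-! ### Linearity of `gY` and `WY` -/

lemma gY_smul (ν c : ℝ) (f : ℕ → ℝ) (t : ℕ) :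
    gY ν (fun n => c * f n) t = c * gY ν f t := by
  simp only [gY, Finset.mul_sum]
  exact sum_congr rfl fun j _ => by ring

lemma WY_smul (μ c : ℝ) (f : ℕ → ℝ) (t : ℕ) :
    WY μ (fun n => c * f n) t = c * WY μ f t := by
  simp only [WY, Finset.mul_sum]
  exact sum_congr rfl fun j _ => by ring

lemma gY_sub (ν : ℝ) (f g : ℕ → ℝ) (t : ℕ) :
    gY ν (fun n => f n - g n) t = gY ν f t - gY ν g t := by
  simp only [gY, Finset.mul_sum]
  rw [← sum_sub_distrib]
  exact sum_congr rfl fun j _ => by ring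

lemma WY_sub (μ : ℝ) (f g : ℕ → ℝ) (t : ℕ) :
    WY μ (fun n => f n - g n) t = WY μ f t - WY μ g t := by
  simp only [WY, Finset.mul_sum]
  rw [← sum_sub_distrib]
  exact sum_congr rfl fun j _ => by ring

lemma gY_sum {ι : Type*} (ν : ℝ) (S : Finset ι) (g : ι → ℕ → ℝ) (t : ℕ) :
    gY ν (fun n => ∑ j ∈ S, g j n) t = ∑ j ∈ S, gY ν (g j) t := by
  simp only [gY, Finset.mul_sum]
  rw [Finset.sum_comm]

lemma WY_sum {ι : Type*} (μ : ℝ) (S : Finset ι) (g : ι → ℕ → ℝ) (t : ℕ) :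
    WY μ (fun n => ∑ j ∈ S, g j n) t = ∑ j ∈ S, WY μ (g j) t := by
  simp only [WY, Finset.mul_sum]
  rw [Finset.sum_comm]

/-! ### The Mittag-Leffler series in terms of `fk` -/

noncomputable def Useq (μ ν α : ℝ) (s n : ℕ) : ℝ :=
  ∑' k : ℕ, α ^ k * fk ((k:ℝ) * (ν - μ) + ν) s n

lemma ml_eq {μ ν : ℝ} (α : ℝ) (hμ1 : μ < 1) (hν1 : 1 < ν) (s n : ℕ) :
    mittagLeffler (ν - μ) ν α ((n:ℤ) - (s:ℤ)) = Useq μ ν α s n := by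
  unfold mittagLeffler Useq
  refine tsum_congr fun k => ?_
  have hk0 : (0:ℝ) ≤ (k:ℝ) := Nat.cast_nonneg k
  have hc : 0 < (k:ℝ)*(ν-μ) + ν := by nlinarith
  have hΓ : Real.Gamma ((k:ℝ)*(ν-μ) + ν) ≠ 0 := (Real.Gamma_pos_of_pos hc).ne'
  rcases le_or_gt s n with h | h
  · have e1 : (((n:ℤ) - (s:ℤ) : ℤ):ℝ) + (k:ℝ)*(ν-μ) + ν - 1 + 1
        = ((n - s : ℕ):ℝ) + ((k:ℝ)*(ν-μ) + ν) := by
      push_cast [Nat.cast_sub h]; ring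
    have e2 : (((n:ℤ) - (s:ℤ) : ℤ):ℝ) + (k:ℝ)*(ν-μ) + ν - 1 + 1 - ((k:ℝ)*(ν-μ) + ν - 1)
        = ((n - s : ℕ):ℝ) + 1 := by
      push_cast [Nat.cast_sub h]; ring
    rw [ffact, e2]
    rw [show (((n:ℤ) - (s:ℤ) : ℤ):ℝ) + (k:ℝ)*(ν-μ) + ν - 1 + 1
        = ((n - s : ℕ):ℝ) + ((k:ℝ)*(ν-μ) + ν) from e1]
    rw [Fq_eq_Gamma _ hc, fk, if_pos h]
    field_simp
  · have e2 : (((n:ℤ) - (s:ℤ) : ℤ):ℝ) + (k:ℝ)*(ν-μ) + ν - 1 + 1 - ((k:ℝ)*(ν-μ) + ν - 1)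
        = -((s - n - 1 : ℕ):ℝ) := by
      push_cast [Nat.cast_sub (by omega : 1 ≤ s - n), Nat.cast_sub (le_of_lt h)]; ring
    rw [ffact, e2, Real.Gamma_neg_nat_eq_zero, div_zero, mul_zero, zero_div, fk,
      if_neg (by omega), mul_zero]

lemma Useq_zero {μ ν : ℝ} (α : ℝ) (s n : ℕ) (h : n < s) : Useq μ ν α s n = 0 := by
  unfold Useq
  rw [tsum_congr (fun k => by rw [fk, if_neg (by omega), mul_zero]), tsum_zero]

/-! ### The key computation: the operator applied to `Useq s` -/

lemma key {μ ν α : ℝ} (hμ0 : 0 < μ) (hμ1 : μ < 1) (hν1 : 1 < ν) (hν2 : ν < 2)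
    (hα : |α| < 1) (s : ℕ) (hs : 1 ≤ s) (t : ℕ) :
    -(gY ν (Useq μ ν α s) (t+2) - 2 * gY ν (Useq μ ν α s) (t+1) + gY ν (Useq μ ν α s) t)
      + α * (WY μ (Useq μ ν α s) (t+1) - WY μ (Useq μ ν α s) t)
      = -(if t + 2 = s then (1:ℝ) else 0) := by
  have hν' : 0 < 2 - ν := by linarith
  have hμ' : 0 < 1 - μ := by linarith
  have hsum : ∀ (β : ℝ) (s' j : ℕ), Summable (fun k : ℕ => α^k * fk ((k:ℝ)*(ν-μ) + β) s' j) :=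
    fun β s' j => summable_fk hα (ν-μ) β s' j
  have hU : Useq μ ν α s = fun n => ∑' k : ℕ, α^k * fk ((k:ℝ)*(ν-μ) + ν) s n := rfl
  have hg : ∀ τ, gY ν (Useq μ ν α s) τ = ∑' k : ℕ, α^k * fk ((k:ℝ)*(ν-μ) + 2) s τ := by
    intro τ
    rw [hU, gY_tsum _ (fun j => hsum ν s j)]
    refine tsum_congr fun k => ?_
    rw [gY_smul, gY_fk hν',
      show (2-ν) + ((k:ℝ)*(ν-μ) + ν) = (k:ℝ)*(ν-μ) + 2 from by ring]
  have hw : ∀ τ, WY μ (Useq μ ν α s) τ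
      = ∑' k : ℕ, α^k * fk ((k:ℝ)*(ν-μ) + ((ν-μ)+1)) (s-1) τ := by
    intro τ
    rw [hU, WY_tsum _ (fun j => hsum ν s j)]
    refine tsum_congr fun k => ?_
    rw [WY_smul, WY_fk hμ' _ _ _ hs,
      show (1-μ) + ((k:ℝ)*(ν-μ) + ν) = (k:ℝ)*(ν-μ) + ((ν-μ)+1) from by ring]
  rw [hg, hg, hg, hw, hw]
  -- the g-side second difference
  have hgd : (∑' k : ℕ, α^k * fk ((k:ℝ)*(ν-μ)+2) s (t+2))
        - 2 * (∑' k : ℕ, α^k * fk ((k:ℝ)*(ν-μ)+2) s (t+1))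
        + (∑' k : ℕ, α^k * fk ((k:ℝ)*(ν-μ)+2) s t)
      = ∑' k : ℕ, α^k * fk ((k:ℝ)*(ν-μ)) s (t+2) := by
    rw [← tsum_mul_left, ← Summable.tsum_sub (hsum 2 s (t+2)) ((hsum 2 s (t+1)).mul_left 2),
      ← Summable.tsum_add ((hsum 2 s (t+2)).sub ((hsum 2 s (t+1)).mul_left 2)) (hsum 2 s t)]
    refine tsum_congr fun k => ?_
    have h1 := fk_step ((k:ℝ)*(ν-μ)+1) s (t+1)
    have h2 := fk_step ((k:ℝ)*(ν-μ)+1) s t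
    have h3 := fk_step ((k:ℝ)*(ν-μ)) s (t+1)
    rw [show ((k:ℝ)*(ν-μ)+1)+1 = (k:ℝ)*(ν-μ)+2 from by ring] at h1 h2
    rw [show ((k:ℝ)*(ν-μ))+1 = (k:ℝ)*(ν-μ)+1 from by ring] at h3
    linear_combination α^k * h1 - α^k * h2 + α^k * h3
  -- split off k = 0
  have hsum0 : Summable (fun k : ℕ => α^k * fk ((k:ℝ)*(ν-μ)) s (t+2)) := by
    have := hsum 0 s (t+2)
    simpa using this
  have hsplit : (∑' k : ℕ, α^k * fk ((k:ℝ)*(ν-μ)) s (t+2))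
      = (if t + 2 = s then (1:ℝ) else 0)
        + ∑' k : ℕ, α^(k+1) * fk (((k:ℝ)+1)*(ν-μ)) s (t+2) := by
    rw [Summable.tsum_eq_zero_add hsum0]
    congr 1
    · simp [fk_zero_param]
    · refine tsum_congr fun k => ?_
      push_cast
      ring_nf
  -- the W-side first difference
  have hwd : α * ((∑' k : ℕ, α^k * fk ((k:ℝ)*(ν-μ) + ((ν-μ)+1)) (s-1) (t+1))
        - ∑' k : ℕ, α^k * fk ((k:ℝ)*(ν-μ) + ((ν-μ)+1)) (s-1) t)
      = ∑' k : ℕ, α^(k+1) * fk (((k:ℝ)+1)*(ν-μ)) (s-1) (t+1) := by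
    rw [← Summable.tsum_sub (hsum ((ν-μ)+1) (s-1) (t+1)) (hsum ((ν-μ)+1) (s-1) t), ← tsum_mul_left]
    refine tsum_congr fun k => ?_
    have h := fk_step ((k:ℝ)*(ν-μ)+(ν-μ)) (s-1) t
    rw [show ((k:ℝ)*(ν-μ)+(ν-μ))+1 = (k:ℝ)*(ν-μ)+((ν-μ)+1) from by ring,
      show (k:ℝ)*(ν-μ)+(ν-μ) = ((k:ℝ)+1)*(ν-μ) from by ring] at h
    linear_combination α^(k+1) * h
  rw [hgd, hsplit, hwd]
  have hshift : ∀ k : ℕ, fk (((k:ℝ)+1)*(ν-μ)) s (t+2) = fk (((k:ℝ)+1)*(ν-μ)) (s-1) (t+1) :=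
    fun k => fk_shift _ s (t+1) hs
  rw [tsum_congr (fun k => by rw [hshift k])]
  ring

/-! ### Combining finite sums for the operator -/

lemma sum_combine {S : Finset ℕ} (a : ℝ) (A2 A1 A0 B1 B0 : ℕ → ℝ) :
    -((∑ j ∈ S, A2 j) - 2*(∑ j ∈ S, A1 j) + ∑ j ∈ S, A0 j)
      + a*((∑ j ∈ S, B1 j) - ∑ j ∈ S, B0 j)
    = ∑ j ∈ S, (-(A2 j - 2*A1 j + A0 j) + a*(B1 j - B0 j)) := by
  induction S using Finset.cons_induction with
  | empty => simp
  | cons j S hj ih => simp only [Finset.sum_cons]; linear_combination ih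

/-- The function `Y(n) = ∑_{j=1}^{b+2} G(n,j) H(j)` built from the Green's function
solves the Dirichlet problem: `Y(0) = Y(b+3) = 0` and
`-(g_Y(t+2) - 2g_Y(t+1) + g_Y(t)) + α(W_Y(t+1) - W_Y(t)) = H(t+1)` for
`t ∈ {0,…,b+1}`. -/
theorem green_function_solves (μ ν α : ℝ) (b : ℕ)
    (hμ0 : 0 < μ) (hμ1 : μ < 1) (hν1 : 1 < ν) (hν2 : ν < 2) (hα : |α| < 1)
    (hml : mittagLeffler (ν - μ) ν α ((b : ℤ) + 2) ≠ 0)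
    (H : ℕ → ℝ) (Y : ℕ → ℝ)
    (hY : ∀ n : ℕ, Y n = ∑ j ∈ Finset.Icc 1 (b + 2), green μ ν α b n j * H j) :
    Y 0 = 0 ∧ Y (b + 3) = 0 ∧
      ∀ t ≤ b + 1,
        -(gY ν Y (t + 2) - 2 * gY ν Y (t + 1) + gY ν Y t)
          + α * (WY μ Y (t + 1) - WY μ Y t) = H (t + 1) := by
  have hml_eq : ∀ s n : ℕ, mittagLeffler (ν-μ) ν α ((n:ℤ) - (s:ℤ)) = Useq μ ν α s n :=
    fun s n => ml_eq α hμ1 hν1 s n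
  refine ⟨?_, ?_, ?_⟩
  · rw [hY 0]
    refine sum_eq_zero fun j hj => ?_
    simp only [mem_Icc] at hj
    simp only [green, if_neg (show ¬ j ≤ 0 by omega)]
    rw [show ((0:ℕ):ℤ) - 1 = ((0:ℕ):ℤ) - ((1:ℕ):ℤ) from by norm_num, hml_eq 1 0,
      Useq_zero α 1 0 (by omega)]
    simp
  · rw [hY (b+3)]
    refine sum_eq_zero fun j hj => ?_
    simp only [mem_Icc] at hj
    simp only [green, if_pos (show j ≤ b + 3 by omega)]
    rw [show ((b+3:ℕ):ℤ) - 1 = (b:ℤ) + 2 from by push_cast; ring,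
      show ((b+3:ℕ):ℤ) - (j:ℤ) - 1 = (b:ℤ) + 2 - j from by push_cast; ring,
      mul_comm (mittagLeffler (ν-μ) ν α ((b:ℤ)+2)) (mittagLeffler (ν-μ) ν α ((b:ℤ)+2-(j:ℤ))),
      mul_div_assoc, div_self hml, mul_one, sub_self, zero_mul]
  · intro t ht
    have hYe : Y = fun n => ∑ j ∈ Icc 1 (b+2),
        ((mittagLeffler (ν-μ) ν α ((b:ℤ)+2-(j:ℤ)) / mittagLeffler (ν-μ) ν α ((b:ℤ)+2) * H j)
            * Useq μ ν α 1 n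
          - H j * Useq μ ν α (j+1) n) := by
      funext n
      rw [hY n]
      refine sum_congr rfl fun j hj => ?_
      simp only [mem_Icc] at hj
      have hU1 : mittagLeffler (ν-μ) ν α ((n:ℤ) - 1) = Useq μ ν α 1 n := by
        rw [show (n:ℤ) - 1 = (n:ℤ) - ((1:ℕ):ℤ) from by norm_num]
        exact hml_eq 1 n
      simp only [green]
      by_cases hc : j ≤ n
      · rw [if_pos hc, hU1,
          show (n:ℤ) - (j:ℤ) - 1 = (n:ℤ) - (((j+1:ℕ)):ℤ) from by push_cast; ring,
          hml_eq (j+1) n]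
        ring
      · rw [if_neg hc, hU1, Useq_zero α (j+1) n (by omega)]
        ring
    have hgl : ∀ τ, gY ν Y τ = ∑ j ∈ Icc 1 (b+2),
        ((mittagLeffler (ν-μ) ν α ((b:ℤ)+2-(j:ℤ)) / mittagLeffler (ν-μ) ν α ((b:ℤ)+2) * H j)
            * gY ν (Useq μ ν α 1) τ
          - H j * gY ν (Useq μ ν α (j+1)) τ) := by
      intro τ
      rw [hYe, gY_sum]
      refine sum_congr rfl fun j _ => ?_
      rw [gY_sub, gY_smul, gY_smul]
    have hwl : ∀ τ, WY μ Y τ = ∑ j ∈ Icc 1 (b+2),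
        ((mittagLeffler (ν-μ) ν α ((b:ℤ)+2-(j:ℤ)) / mittagLeffler (ν-μ) ν α ((b:ℤ)+2) * H j)
            * WY μ (Useq μ ν α 1) τ
          - H j * WY μ (Useq μ ν α (j+1)) τ) := by
      intro τ
      rw [hYe, WY_sum]
      refine sum_congr rfl fun j _ => ?_
      rw [WY_sub, WY_smul, WY_smul]
    rw [hgl, hgl, hgl, hwl, hwl, sum_combine]
    have hV : ∀ j ∈ Icc 1 (b+2),
        (-(((mittagLeffler (ν-μ) ν α ((b:ℤ)+2-(j:ℤ)) / mittagLeffler (ν-μ) ν α ((b:ℤ)+2) * H j)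
              * gY ν (Useq μ ν α 1) (t+2) - H j * gY ν (Useq μ ν α (j+1)) (t+2))
          - 2*((mittagLeffler (ν-μ) ν α ((b:ℤ)+2-(j:ℤ)) / mittagLeffler (ν-μ) ν α ((b:ℤ)+2) * H j)
              * gY ν (Useq μ ν α 1) (t+1) - H j * gY ν (Useq μ ν α (j+1)) (t+1))
          + ((mittagLeffler (ν-μ) ν α ((b:ℤ)+2-(j:ℤ)) / mittagLeffler (ν-μ) ν α ((b:ℤ)+2) * H j)
              * gY ν (Useq μ ν α 1) t - H j * gY ν (Useq μ ν α (j+1)) t))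
        + α*(((mittagLeffler (ν-μ) ν α ((b:ℤ)+2-(j:ℤ)) / mittagLeffler (ν-μ) ν α ((b:ℤ)+2) * H j)
              * WY μ (Useq μ ν α 1) (t+1) - H j * WY μ (Useq μ ν α (j+1)) (t+1))
          - ((mittagLeffler (ν-μ) ν α ((b:ℤ)+2-(j:ℤ)) / mittagLeffler (ν-μ) ν α ((b:ℤ)+2) * H j)
              * WY μ (Useq μ ν α 1) t - H j * WY μ (Useq μ ν α (j+1)) t)))
        = if j = t+1 then H j else 0 := by
      intro j hj
      simp only [mem_Icc] at hj
      have k1 := key hμ0 hμ1 hν1 hν2 hα 1 le_rfl t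
      have kj := key hμ0 hμ1 hν1 hν2 hα (j+1) (by omega) t
      rw [if_neg (by omega)] at k1
      by_cases he : j = t+1
      · rw [if_pos he]
        rw [if_pos (by omega)] at kj
        linear_combination (mittagLeffler (ν-μ) ν α ((b:ℤ)+2-(j:ℤ))
            / mittagLeffler (ν-μ) ν α ((b:ℤ)+2) * H j) * k1 - H j * kj
      · rw [if_neg he]
        rw [if_neg (by omega)] at kj
        linear_combination (mittagLeffler (ν-μ) ν α ((b:ℤ)+2-(j:ℤ))
            / mittagLeffler (ν-μ) ν α ((b:ℤ)+2) * H j) * k1 - H j * kj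
    rw [sum_congr rfl hV, Finset.sum_ite_eq' (Icc 1 (b+2)) (t+1) H,
      if_pos (by simp only [mem_Icc]; omega)]
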